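/- Let X be a ℚ-valued discrete random variable with g(a) := H[X - a X'] - H[X], where X' is an independent copy of X. Then for any a₁, a₂ ∈ ℚ one has the submultiplicativity bound g(a₁ a₂) ≤ g(a₁) + g(a₂). -/

import Mathlib

/-!
Put three independent copies `X₁, X₂, X₃` of `X` on a product space. Submodularity of entropy,
`H[X,Y,Z] + H[Y] ≤ H[X,Y] + H[Y,Z]`, which follows from `log r ≤ r - 1`, yields the improved
Ruzsa triangle inequality `H[A - C] + H[B] ≤ H[A - B] + H[B - C]` for `B` independent of `(A, C)`.
For `A = X₁`, `B = a₁ X₃`, `C = a₁ a₂ X₂` its four terms are `H[X - a₁ a₂ X']`, `H[X]`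
(if `a₁ ≠ 0`), `H[X - a₁ X']`, and at most `H[X - a₂ X']`, which is the claim. For `a₁ = 0` the
claim is `g(a₂) ≥ 0`, the same inequality for `A = X₁`, `B = a₂ X₂`, `C = 0`.
-/

open scoped Classical
open Finset

/-- Probability of an event under a weight function on a finite sample space. -/
noncomputable def prb {Ω : Type*} [Fintype Ω] (μ : Ω → ℝ) (E : Set Ω) : ℝ :=
  ∑ ω ∈ Finset.univ.filter (fun ω => ω ∈ E), μ ω

/-- `μ` is a probability mass function on the finite space `Ω`. -/
def IsProb {Ω : Type*} [Fintype Ω] (μ : Ω → ℝ) : Prop :=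
  (∀ ω, 0 ≤ μ ω) ∧ ∑ ω, μ ω = 1

/-- Shannon entropy of a random variable `X` on a finite probability space. -/
noncomputable def ent {Ω S : Type*} [Fintype Ω] (μ : Ω → ℝ) (X : Ω → S) : ℝ :=
  ∑ s ∈ Finset.univ.image X, Real.negMulLog (prb μ {ω | X ω = s})

/-- Independence of two random variables. -/
def IndepRV {Ω S T : Type*} [Fintype Ω] (μ : Ω → ℝ) (X : Ω → S) (Y : Ω → T) : Prop :=
  ∀ x y, prb μ {ω | X ω = x ∧ Y ω = y} = prb μ {ω | X ω = x} * prb μ {ω | Y ω = y}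

/-- Conditional Shannon entropy `H[X|Z] = H[X,Z] - H[Z]`. -/
noncomputable def condEnt {Ω S T : Type*} [Fintype Ω] (μ : Ω → ℝ) (X : Ω → S) (Z : Ω → T) : ℝ :=
  ent μ (fun ω => (X ω, Z ω)) - ent μ Z

/-- Entropic Ruzsa distance `d[X;Y] = H[X'-Y'] - H[X]/2 - H[Y]/2`,
realized on the product space so that the copies are independent. -/
noncomputable def rdist {Ω₁ Ω₂ : Type*} [Fintype Ω₁] [Fintype Ω₂]
    (μ₁ : Ω₁ → ℝ) (μ₂ : Ω₂ → ℝ) (X : Ω₁ → ℚ) (Y : Ω₂ → ℚ) : ℝ :=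
  ent (fun p : Ω₁ × Ω₂ => μ₁ p.1 * μ₂ p.2) (fun p => X p.1 - Y p.2)
    - ent μ₁ X / 2 - ent μ₂ Y / 2

/-- The quantity `g(a) = H[X - a X'] - H[X]`, where `X'` is an independent copy of `X`. -/
noncomputable def gfun {Ω : Type*} [Fintype Ω] (μ : Ω → ℝ) (X : Ω → ℚ) (a : ℚ) : ℝ :=
  ent (fun p : Ω × Ω => μ p.1 * μ p.2) (fun p => X p.1 - a * X p.2) - ent μ X

/-- Projection `π_r(x,y) = x + r y` for a finite slope `some r`, and `π_∞(x,y) = y`. -/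
noncomputable def pSlope : Option ℚ → ℚ × ℚ → ℚ
  | none, p => p.2
  | some r, p => p.1 + r * p.2

/-- The measure `μ` conditioned on the event `Z = z`. -/
noncomputable def condMeasure {Ω T : Type*} [Fintype Ω] (μ : Ω → ℝ) (Z : Ω → T) (z : T) :
    Ω → ℝ :=
  fun ω => if Z ω = z then μ ω / prb μ {ω' | Z ω' = z} else 0

/-- `E_{Z=z} d[X|Z=z ; X|Z=z]`, the averaged conditional entropic Ruzsa self-distance. -/
noncomputable def condSelfDoubling {Ω T : Type*} [Fintype Ω] (μ : Ω → ℝ)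
    (X : Ω → ℚ) (Z : Ω → T) : ℝ :=
  ∑ z ∈ Finset.univ.image Z, prb μ {ω | Z ω = z} *
    rdist (condMeasure μ Z z) (condMeasure μ Z z) X X

section Basic

variable {Ω S T U : Type*} [Fintype Ω] {μ : Ω → ℝ}

lemma prb_eq_sum_ite (μ : Ω → ℝ) (E : Set Ω) :
    prb μ E = ∑ ω, if ω ∈ E then μ ω else 0 :=
  Finset.sum_filter _ _

lemma prb_mono (hμ : ∀ ω, 0 ≤ μ ω) {E F : Set Ω} (h : E ⊆ F) : prb μ E ≤ prb μ F :=
  Finset.sum_le_sum_of_subset_of_nonneg (Finset.monotone_filter_right _ fun _ _ hω => h hω)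
    fun ω _ _ => hμ ω

lemma prb_nonneg (hμ : ∀ ω, 0 ≤ μ ω) (E : Set Ω) : 0 ≤ prb μ E :=
  Finset.sum_nonneg fun ω _ => hμ ω

lemma le_prb_of_mem (hμ : ∀ ω, 0 ≤ μ ω) {E : Set Ω} {ω : Ω} (h : ω ∈ E) : μ ω ≤ prb μ E :=
  Finset.single_le_sum (fun ω _ => hμ ω) (Finset.mem_filter.2 ⟨Finset.mem_univ _, h⟩)

lemma prb_fiber_pos (hμ : ∀ ω, 0 ≤ μ ω) (X : Ω → S) {ω : Ω} (hω : 0 < μ ω) :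
    0 < prb μ {ω' | X ω' = X ω} :=
  hω.trans_le (le_prb_of_mem hμ rfl)

lemma sum_prb_and (μ : Ω → ℝ) (X : Ω → S) (P : Ω → Prop) :
    ∑ s ∈ univ.image X, prb μ {ω | X ω = s ∧ P ω} = prb μ {ω | P ω} := by
  simp only [prb_eq_sum_ite, Set.mem_ofPred_eq]
  rw [Finset.sum_comm]
  refine Finset.sum_congr rfl fun ω _ => ?_
  by_cases hP : P ω <;> simp [hP]

lemma sum_prb (μ : Ω → ℝ) (X : Ω → S) :
    ∑ s ∈ univ.image X, prb μ {ω | X ω = s} = ∑ ω, μ ω := by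
  simpa [prb_eq_sum_ite] using sum_prb_and μ X (fun _ => True)

lemma ent_eq_sum (μ : Ω → ℝ) (X : Ω → S) :
    ent μ X = ∑ ω, μ ω * -Real.log (prb μ {ω' | X ω' = X ω}) := by
  rw [ent, ← Finset.sum_fiberwise_of_maps_to (t := univ.image X) (g := X)
    (fun ω _ => Finset.mem_image_of_mem X (Finset.mem_univ ω))]
  refine Finset.sum_congr rfl fun s _ => ?_
  rw [Real.negMulLog, neg_mul, ← mul_neg]
  nth_rewrite 1 [prb]
  rw [Finset.sum_mul]
  exact Finset.sum_congr rfl fun ω hω => by rw [(Finset.mem_filter.1 hω).2]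

lemma ent_eq_sum_of_subset (μ : Ω → ℝ) (X : Ω → S) {A : Finset S} (hA : ∀ ω, X ω ∈ A) :
    ent μ X = ∑ s ∈ A, Real.negMulLog (prb μ {ω | X ω = s}) := by
  refine Finset.sum_subset (fun s hs => ?_) fun s _ hs => ?_
  · obtain ⟨ω, -, rfl⟩ := Finset.mem_image.1 hs
    exact hA ω
  · have hempty : univ.filter (fun ω => ω ∈ {ω | X ω = s}) = ∅ :=
      Finset.filter_false_of_mem fun ω _ hω => hs (hω ▸ Finset.mem_image_of_mem X (mem_univ ω))
    rw [prb, hempty, Finset.sum_empty, Real.negMulLog_zero]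

lemma ent_congr_law {Ω' : Type*} [Fintype Ω'] (μ : Ω → ℝ) (ν : Ω' → ℝ) (X : Ω → S)
    (Y : Ω' → S) (h : ∀ s, prb μ {ω | X ω = s} = prb ν {ω | Y ω = s}) : ent μ X = ent ν Y := by
  rw [ent_eq_sum_of_subset μ X (A := univ.image X ∪ univ.image Y)
      fun ω => Finset.mem_union_left _ (Finset.mem_image_of_mem X (mem_univ ω)),
    ent_eq_sum_of_subset ν Y fun ω =>
      Finset.mem_union_right (univ.image X) (Finset.mem_image_of_mem Y (mem_univ ω))]
  simp only [h]

lemma ent_le_of_determines (hμ : ∀ ω, 0 ≤ μ ω) {X : Ω → S} {Y : Ω → T}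
    (h : ∀ ω ω', X ω' = X ω → Y ω' = Y ω) : ent μ Y ≤ ent μ X := by
  rw [ent_eq_sum, ent_eq_sum]
  refine Finset.sum_le_sum fun ω _ => ?_
  rcases (hμ ω).eq_or_lt with hzero | hpos
  · simp [← hzero]
  · exact mul_le_mul_of_nonneg_left (neg_le_neg (Real.log_le_log (prb_fiber_pos hμ X hpos)
      (prb_mono hμ fun ω' => h ω ω'))) (hμ ω)

lemma ent_eq_of_eq_iff {X : Ω → S} {Y : Ω → T} (h : ∀ ω ω', X ω' = X ω ↔ Y ω' = Y ω) :
    ent μ X = ent μ Y := by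
  simp only [ent_eq_sum, h]

lemma ent_const_mul {R : Type*} [Mul R] [Zero R] [IsLeftCancelMulZero R] (X : Ω → R) {a : R}
    (ha : a ≠ 0) : ent μ (fun ω => a * X ω) = ent μ X :=
  ent_eq_of_eq_iff fun _ _ => mul_right_inj' ha

lemma ent_const (hμ : ∑ ω, μ ω = 1) (c : S) : ent μ (fun _ => c) = 0 := by
  simp [ent_eq_sum, prb, hμ]

lemma ent_pair_of_indepRV (hμ : ∀ ω, 0 ≤ μ ω) {X : Ω → S} {Y : Ω → T} (h : IndepRV μ X Y) :
    ent μ (fun ω => (X ω, Y ω)) = ent μ X + ent μ Y := by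
  rw [ent_eq_sum, ent_eq_sum, ent_eq_sum, ← Finset.sum_add_distrib]
  refine Finset.sum_congr rfl fun ω _ => ?_
  rcases (hμ ω).eq_or_lt with hzero | hpos
  · simp [← hzero]
  · simp only [Prod.mk.injEq, h (X ω) (Y ω),
      Real.log_mul (prb_fiber_pos hμ X hpos).ne' (prb_fiber_pos hμ Y hpos).ne']
    ring

lemma sum_mul_div_prb_fiber_le [DecidableEq S] (hμ : ∀ ω, 0 ≤ μ ω) (W : Ω → S) {F : S → ℝ}
    (hF : ∀ s, 0 ≤ F s) :
    ∑ ω, μ ω * (F (W ω) / prb μ {ω' | W ω' = W ω}) ≤ ∑ s ∈ univ.image W, F s := by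
  rw [← Finset.sum_fiberwise_of_maps_to (t := univ.image W) (g := W)
    (fun ω _ => Finset.mem_image_of_mem W (mem_univ ω))]
  refine Finset.sum_le_sum fun s _ => ?_
  calc ∑ ω with W ω = s, μ ω * (F (W ω) / prb μ {ω' | W ω' = W ω})
      = (∑ ω with W ω = s, μ ω) * (F s / prb μ {ω | W ω = s}) := by
        rw [Finset.sum_mul]
        exact Finset.sum_congr rfl fun ω hω => by rw [(Finset.mem_filter.1 hω).2]
    _ = prb μ {ω | W ω = s} * (F s / prb μ {ω | W ω = s}) := by
        simp only [prb, Set.mem_ofPred_eq]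
    _ ≤ F s := by
        rcases (prb_nonneg hμ {ω | W ω = s}).eq_or_lt with hzero | hpos
        · simp [← hzero, hF s]
        · rw [mul_div_cancel₀ _ hpos.ne']

lemma sum_image_prb_mul_prb_div_prb_le (hμ : ∀ ω, 0 ≤ μ ω) (X : Ω → S) (Y : Ω → T)
    (Z : Ω → U) :
    ∑ w ∈ univ.image (fun ω => (X ω, Y ω, Z ω)),
        prb μ {ω | X ω = w.1 ∧ Y ω = w.2.1} * prb μ {ω | Y ω = w.2.1 ∧ Z ω = w.2.2}
          / prb μ {ω | Y ω = w.2.1}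
      ≤ ∑ ω, μ ω := by
  have hsub : univ.image (fun ω => (X ω, Y ω, Z ω))
      ⊆ univ.image X ×ˢ univ.image Y ×ˢ univ.image Z := fun w hw => by
    obtain ⟨ω, -, rfl⟩ := Finset.mem_image.1 hw
    simp
  calc _ ≤ ∑ x ∈ univ.image X, ∑ y ∈ univ.image Y, ∑ z ∈ univ.image Z,
          prb μ {ω | X ω = x ∧ Y ω = y} * prb μ {ω | Y ω = y ∧ Z ω = z} / prb μ {ω | Y ω = y} := by
        simp only [← Finset.sum_product']
        exact Finset.sum_le_sum_of_subset_of_nonneg hsub fun _ _ _ =>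
          div_nonneg (mul_nonneg (prb_nonneg hμ _) (prb_nonneg hμ _)) (prb_nonneg hμ _)
    _ = ∑ y ∈ univ.image Y, prb μ {ω | Y ω = y} * prb μ {ω | Y ω = y} / prb μ {ω | Y ω = y} := by
        rw [Finset.sum_comm]
        refine Finset.sum_congr rfl fun y _ => ?_
        simp only [← Finset.sum_div, ← Finset.mul_sum, ← Finset.sum_mul, sum_prb_and]
        simp only [and_comm (a := Y _ = y), sum_prb_and]
    _ ≤ ∑ y ∈ univ.image Y, prb μ {ω | Y ω = y} :=
        Finset.sum_le_sum fun y _ => (mul_self_div_self _).le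
    _ = ∑ ω, μ ω := sum_prb μ Y

lemma log_mul_div_div_le {a b c d : ℝ} (ha : 0 < a) (hb : 0 < b) (hc : 0 < c) (hd : 0 < d) :
    Real.log a + Real.log b - Real.log d - Real.log c ≤ a * b / d / c - 1 := by
  have h := Real.log_le_sub_one_of_pos (show 0 < a * b / d / c by positivity)
  rwa [Real.log_div (by positivity) hc.ne', Real.log_div (by positivity) hd.ne',
    Real.log_mul ha.ne' hb.ne'] at h

lemma ent_triple_add_ent_le (hμ : ∀ ω, 0 ≤ μ ω) (X : Ω → S) (Y : Ω → T) (Z : Ω → U) :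
    ent μ (fun ω => (X ω, Y ω, Z ω)) + ent μ Y
      ≤ ent μ (fun ω => (X ω, Y ω)) + ent μ (fun ω => (Y ω, Z ω)) := by
  have hgibbs := sum_mul_div_prb_fiber_le hμ (fun ω => (X ω, Y ω, Z ω))
    (F := fun w => prb μ {ω | X ω = w.1 ∧ Y ω = w.2.1} * prb μ {ω | Y ω = w.2.1 ∧ Z ω = w.2.2}
      / prb μ {ω | Y ω = w.2.1})
    fun w => div_nonneg (mul_nonneg (prb_nonneg hμ _) (prb_nonneg hμ _)) (prb_nonneg hμ _)
  have hmass := sum_image_prb_mul_prb_div_prb_le hμ X Y Z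
  -- `log r ≤ r - 1` for `r = p(x,y) p(y,z) / (p(y) p(x,y,z))`, whose mean `hgibbs` and `hmass`
  -- bound by `1`.
  have key : ∀ ω, μ ω * -Real.log (prb μ {ω' | X ω' = X ω ∧ Y ω' = Y ω ∧ Z ω' = Z ω})
      + μ ω * -Real.log (prb μ {ω' | Y ω' = Y ω})
      - (μ ω * -Real.log (prb μ {ω' | X ω' = X ω ∧ Y ω' = Y ω})
        + μ ω * -Real.log (prb μ {ω' | Y ω' = Y ω ∧ Z ω' = Z ω}))
      ≤ μ ω * (prb μ {ω' | X ω' = X ω ∧ Y ω' = Y ω} * prb μ {ω' | Y ω' = Y ω ∧ Z ω' = Z ω}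
          / prb μ {ω' | Y ω' = Y ω} / prb μ {ω' | X ω' = X ω ∧ Y ω' = Y ω ∧ Z ω' = Z ω})
        - μ ω := by
    intro ω
    rcases (hμ ω).eq_or_lt with hzero | hpos
    · simp [← hzero]
    have pos : ∀ E : Set Ω, ω ∈ E → 0 < prb μ E := fun E h => hpos.trans_le (le_prb_of_mem hμ h)
    have h := mul_le_mul_of_nonneg_left (log_mul_div_div_le
      (pos {ω' | X ω' = X ω ∧ Y ω' = Y ω} ⟨rfl, rfl⟩)
      (pos {ω' | Y ω' = Y ω ∧ Z ω' = Z ω} ⟨rfl, rfl⟩)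
      (pos {ω' | X ω' = X ω ∧ Y ω' = Y ω ∧ Z ω' = Z ω} ⟨rfl, rfl, rfl⟩)
      (pos {ω' | Y ω' = Y ω} rfl)) (hμ ω)
    linarith
  have hsum := Finset.sum_le_sum fun ω (_ : ω ∈ univ) => key ω
  simp only [Prod.mk.injEq, div_div] at hgibbs
  simp only [Finset.sum_add_distrib, Finset.sum_sub_distrib, div_div] at hsum
  simp only [ent_eq_sum, Prod.mk.injEq]
  linarith [hgibbs.trans hmass]

lemma ent_pair_le (hμ : IsProb μ) (X : Ω → S) (Y : Ω → T) :
    ent μ (fun ω => (X ω, Y ω)) ≤ ent μ X + ent μ Y := by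
  have h := ent_triple_add_ent_le hμ.1 X (fun _ => ()) Y
  have hXY : ent μ (fun ω => (X ω, (), Y ω)) = ent μ (fun ω => (X ω, Y ω)) :=
    ent_eq_of_eq_iff fun _ _ => by simp
  have hX : ent μ (fun ω => (X ω, ())) = ent μ X := ent_eq_of_eq_iff fun _ _ => by simp
  have hY : ent μ (fun ω => ((), Y ω)) = ent μ Y := ent_eq_of_eq_iff fun _ _ => by simp
  rwa [ent_const hμ.2, add_zero, hXY, hX, hY] at h

lemma ent_sub_add_ent_le {G : Type*} [AddCommGroup G] (hμ : IsProb μ) {A B C : Ω → G}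
    (hindep : IndepRV μ (fun ω => (A ω, C ω)) B) :
    ent μ (fun ω => A ω - C ω) + ent μ B
      ≤ ent μ (fun ω => A ω - B ω) + ent μ (fun ω => B ω - C ω) := by
  -- `(A - B, B - C)` determines `A - C`, and together with `(A, C)` it determines `B`.
  have hsub := ent_triple_add_ent_le hμ.1 (fun ω => (A ω - B ω, B ω - C ω))
    (fun ω => A ω - C ω) (fun ω => (A ω, C ω))
  have htriple : ent μ (fun ω => ((A ω - B ω, B ω - C ω), A ω - C ω, A ω, C ω))
      = ent μ (fun ω => ((A ω, C ω), B ω)) :=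
    ent_eq_of_eq_iff fun _ _ => by simp only [Prod.mk.injEq]; grind
  have hleft : ent μ (fun ω => ((A ω - B ω, B ω - C ω), A ω - C ω))
      = ent μ (fun ω => (A ω - B ω, B ω - C ω)) :=
    ent_eq_of_eq_iff fun _ _ => by simp only [Prod.mk.injEq]; grind
  have hright : ent μ (fun ω => (A ω - C ω, A ω, C ω)) = ent μ (fun ω => (A ω, C ω)) :=
    ent_eq_of_eq_iff fun _ _ => by simp only [Prod.mk.injEq]; grind
  rw [htriple, ent_pair_of_indepRV hμ.1 hindep, hleft, hright] at hsub
  linarith [ent_pair_le hμ (fun ω => A ω - B ω) (fun ω => B ω - C ω)]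

end Basic

section Product

variable {Ω₁ Ω₂ Ω₃ S : Type*} [Fintype Ω₁] [Fintype Ω₂] [Fintype Ω₃]
  {μ₁ : Ω₁ → ℝ} {μ₂ : Ω₂ → ℝ} {μ₃ : Ω₃ → ℝ}

lemma isProb_prod (h₁ : IsProb μ₁) (h₂ : IsProb μ₂) :
    IsProb (fun p : Ω₁ × Ω₂ => μ₁ p.1 * μ₂ p.2) :=
  ⟨fun p => mul_nonneg (h₁.1 p.1) (h₂.1 p.2), by
    rw [Fintype.sum_prod_type, ← h₁.2]
    simp [← Finset.mul_sum, h₂.2]⟩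

lemma prb_prod_eq_sum_left (μ₁ : Ω₁ → ℝ) (μ₂ : Ω₂ → ℝ) (P : Ω₁ → Ω₂ → Prop) :
    prb (fun p : Ω₁ × Ω₂ => μ₁ p.1 * μ₂ p.2) {p | P p.1 p.2}
      = ∑ ω, μ₁ ω * prb μ₂ {ω' | P ω ω'} := by
  simp only [prb_eq_sum_ite, Set.mem_ofPred_eq, Fintype.sum_prod_type, Finset.mul_sum, mul_ite,
    mul_zero]

lemma prb_prod_eq_sum_right (μ₁ : Ω₁ → ℝ) (μ₂ : Ω₂ → ℝ) (P : Ω₁ → Ω₂ → Prop) :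
    prb (fun p : Ω₁ × Ω₂ => μ₁ p.1 * μ₂ p.2) {p | P p.1 p.2}
      = ∑ ω', μ₂ ω' * prb μ₁ {ω | P ω ω'} := by
  simp only [prb_eq_sum_ite, Set.mem_ofPred_eq, Fintype.sum_prod_type_right, Finset.mul_sum,
    mul_ite, mul_zero, mul_comm (μ₁ _)]

lemma prb_prod_mk (μ₁ : Ω₁ → ℝ) (μ₂ : Ω₂ → ℝ) (P : Ω₁ → Prop) (Q : Ω₂ → Prop) :
    prb (fun p : Ω₁ × Ω₂ => μ₁ p.1 * μ₂ p.2) {p | P p.1 ∧ Q p.2}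
      = prb μ₁ {ω | P ω} * prb μ₂ {ω | Q ω} := by
  rw [prb_prod_eq_sum_left μ₁ μ₂ (fun ω ω' => P ω ∧ Q ω'), prb, Finset.sum_filter, Finset.sum_mul]
  refine Finset.sum_congr rfl fun ω _ => ?_
  by_cases hP : P ω <;> simp [hP, prb]

lemma prb_prod_fst (h₂ : ∑ ω, μ₂ ω = 1) (P : Ω₁ → Prop) :
    prb (fun p : Ω₁ × Ω₂ => μ₁ p.1 * μ₂ p.2) {p | P p.1} = prb μ₁ {ω | P ω} := by
  simpa [prb, h₂] using prb_prod_mk μ₁ μ₂ P fun _ => True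

lemma prb_prod_snd (h₁ : ∑ ω, μ₁ ω = 1) (Q : Ω₂ → Prop) :
    prb (fun p : Ω₁ × Ω₂ => μ₁ p.1 * μ₂ p.2) {p | Q p.2} = prb μ₂ {ω | Q ω} := by
  simpa [prb, h₁] using prb_prod_mk μ₁ μ₂ (fun _ => True) Q

lemma indepRV_prod {T : Type*} (h₁ : ∑ ω, μ₁ ω = 1) (h₂ : ∑ ω, μ₂ ω = 1) (F : Ω₁ → S)
    (G : Ω₂ → T) :
    IndepRV (fun p : Ω₁ × Ω₂ => μ₁ p.1 * μ₂ p.2) (fun p => F p.1) (fun p => G p.2) :=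
  fun x y => by
    rw [prb_prod_mk μ₁ μ₂ (F · = x) (G · = y), prb_prod_fst h₂ (F · = x),
      prb_prod_snd h₁ (G · = y)]

lemma ent_prod_fst (h₂ : ∑ ω, μ₂ ω = 1) (F : Ω₁ → S) :
    ent (fun p : Ω₁ × Ω₂ => μ₁ p.1 * μ₂ p.2) (fun p => F p.1) = ent μ₁ F :=
  ent_congr_law _ _ _ _ fun s => prb_prod_fst h₂ (F · = s)

lemma ent_prod_snd (h₁ : ∑ ω, μ₁ ω = 1) (G : Ω₂ → S) :
    ent (fun p : Ω₁ × Ω₂ => μ₁ p.1 * μ₂ p.2) (fun p => G p.2) = ent μ₂ G :=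
  ent_congr_law _ _ _ _ fun s => prb_prod_snd h₁ (G · = s)

lemma ent_prod₃_comp₁₃ (h₂ : ∑ ω, μ₂ ω = 1) (F : Ω₁ → Ω₃ → S) :
    ent (fun t : (Ω₁ × Ω₂) × Ω₃ => μ₁ t.1.1 * μ₂ t.1.2 * μ₃ t.2) (fun t => F t.1.1 t.2)
      = ent (fun p : Ω₁ × Ω₃ => μ₁ p.1 * μ₃ p.2) (fun p => F p.1 p.2) :=
  ent_congr_law _ _ _ _ fun s => by
    rw [prb_prod_eq_sum_right (fun p : Ω₁ × Ω₂ => μ₁ p.1 * μ₂ p.2) μ₃ (fun q ω => F q.1 ω = s),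
      prb_prod_eq_sum_right μ₁ μ₃ (fun ω₁ ω₃ => F ω₁ ω₃ = s)]
    exact Finset.sum_congr rfl fun ω₃ _ => by rw [prb_prod_fst h₂ (F · ω₃ = s)]

lemma ent_prod₃_comp₃₂ (h₁ : ∑ ω, μ₁ ω = 1) (F : Ω₃ → Ω₂ → S) :
    ent (fun t : (Ω₁ × Ω₂) × Ω₃ => μ₁ t.1.1 * μ₂ t.1.2 * μ₃ t.2) (fun t => F t.2 t.1.2)
      = ent (fun p : Ω₃ × Ω₂ => μ₃ p.1 * μ₂ p.2) (fun p => F p.1 p.2) :=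
  ent_congr_law _ _ _ _ fun s => by
    rw [prb_prod_eq_sum_right (fun p : Ω₁ × Ω₂ => μ₁ p.1 * μ₂ p.2) μ₃ (fun q ω => F ω q.2 = s),
      prb_prod_eq_sum_left μ₃ μ₂ (fun ω₃ ω₂ => F ω₃ ω₂ = s)]
    exact Finset.sum_congr rfl fun ω₃ _ => by rw [prb_prod_snd h₁ (F ω₃ · = s)]

end Product

section Gfun

variable {Ω : Type*} [Fintype Ω] {μ : Ω → ℝ}

lemma gfun_zero (hμ : IsProb μ) (X : Ω → ℚ) : gfun μ X 0 = 0 := by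
  simp only [gfun, zero_mul, sub_zero, ent_prod_fst hμ.2 X, sub_self]

lemma gfun_nonneg (hμ : IsProb μ) (X : Ω → ℚ) (a : ℚ) : 0 ≤ gfun μ X a := by
  have h := ent_sub_add_ent_le (isProb_prod hμ hμ) (A := fun p => X p.1)
    (B := fun p => a * X p.2) (C := fun _ => 0)
    (indepRV_prod hμ.2 hμ.2 (fun ω => (X ω, (0 : ℚ))) (a * X ·))
  simp only [sub_zero] at h
  rw [ent_prod_fst hμ.2 X] at h
  rw [gfun]
  linarith

end Gfun

/-- submultiplicativity `g(a₁ a₂) ≤ g(a₁) + g(a₂)`. -/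
theorem gfun_mul_le {Ω : Type*} [Fintype Ω] (μ : Ω → ℝ) (hμ : IsProb μ)
    (X : Ω → ℚ) (a₁ a₂ : ℚ) :
    gfun μ X (a₁ * a₂) ≤ gfun μ X a₁ + gfun μ X a₂ := by
  rcases eq_or_ne a₁ 0 with rfl | ha₁
  · rw [zero_mul, gfun_zero hμ]
    linarith [gfun_nonneg hμ X a₂]
  have hμ₂ := isProb_prod hμ hμ
  have hμ₃ := isProb_prod hμ₂ hμ
  have hruzsa := ent_sub_add_ent_le hμ₃ (A := fun t => X t.1.1) (B := fun t => a₁ * X t.2)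
    (C := fun t => a₁ * a₂ * X t.1.2)
    (indepRV_prod hμ₂.2 hμ.2 (fun p => (X p.1, a₁ * a₂ * X p.2)) (a₁ * X ·))
  have hAC := ent_prod_fst (μ₁ := fun p : Ω × Ω => μ p.1 * μ p.2) (μ₂ := μ) hμ.2
    fun p => X p.1 - a₁ * a₂ * X p.2
  have hB := ent_prod_snd (μ₁ := fun p : Ω × Ω => μ p.1 * μ p.2) (μ₂ := μ) hμ₂.2 (a₁ * X ·)
  have hAB := ent_prod₃_comp₁₃ (μ₁ := μ) (μ₃ := μ) hμ.2 fun x y => X x - a₁ * X y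
  have hBC : ent (fun t : (Ω × Ω) × Ω => μ t.1.1 * μ t.1.2 * μ t.2)
      (fun t => a₁ * X t.2 - a₁ * a₂ * X t.1.2)
      ≤ ent _ (fun t : (Ω × Ω) × Ω => X t.2 - a₂ * X t.1.2) :=
    ent_le_of_determines hμ₃.1 fun _ _ h => by linear_combination a₁ * h
  rw [ent_prod₃_comp₃₂ (μ₁ := μ) hμ.2 fun x y => X x - a₂ * X y] at hBC
  rw [gfun, gfun, gfun]
  linarith [ent_const_mul (μ := μ) X ha₁]
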